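/- arXiv:2410.07518 — 3 statements merged into one kernel-verified Lean document; each statement's English description precedes it below -/
import Mathlib

section
/- Let z nonzero indices each independently be assigned a 'depth' in {1,...,d} where depth i occurs with probability 2^{-i}, and with probability 2^{-d} the index is assigned no depth in [1,d]. Define a bucket b_i to contain the indices of depth i, and call bucket b_i 'good' if exactly one index has depth i. Then the probability that some bucket is good satisfies the recurrence F(a,b) = Σ_{i ∈ [0,a] \ {1}} 2^{-a} C(a,i) F(a−i, b−1) + a·2^{-a}, with F(a,b) = 0 if a ≤ 0 or b ≤ 0. -/
open MeasureTheory Finset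

noncomputable def Fprob : ℕ → ℕ → ℝ
  | _, 0 => 0
  | 0, _ + 1 => 0
  | a, b + 1 =>
      (∑ i ∈ (Finset.range (a + 1)).erase 1,
        (2 : ℝ)⁻¹ ^ a * (a.choose i : ℝ) * Fprob (a - i) b) + (a : ℝ) * (2 : ℝ)⁻¹ ^ a

noncomputable def GE : ℕ → ℕ → ENNReal
  | _, 0 => 0
  | 0, _ + 1 => 0
  | a, b + 1 =>
      (∑ i ∈ (Finset.range (a + 1)).erase 1,
        (2 : ENNReal)⁻¹ ^ a * (a.choose i : ENNReal) * GE (a - i) b)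
        + (a : ENNReal) * (2 : ENNReal)⁻¹ ^ a

lemma Fprob_zero (b : ℕ) : Fprob 0 b = 0 := by
  cases b with
  | zero => rw [Fprob]
  | succ b => rw [Fprob]

lemma GE_zero (b : ℕ) : GE 0 b = 0 := by
  cases b with
  | zero => rw [GE]
  | succ b => rw [GE]

lemma Fprob_nonneg (a b : ℕ) : 0 ≤ Fprob a b := by
  induction b generalizing a with
  | zero => rw [Fprob]
  | succ b ih =>
    cases a with
    | zero => rw [Fprob]
    | succ a =>
      rw [Fprob]
      refine add_nonneg (Finset.sum_nonneg fun i _ => ?_) (by positivity)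
      have := ih (a + 1 - i)
      positivity
      all_goals simp

lemma GE_eq (a b : ℕ) : GE a b = ENNReal.ofReal (Fprob a b) := by
  induction b generalizing a with
  | zero => rw [GE, Fprob]; simp
  | succ b ih =>
    cases a with
    | zero => rw [GE, Fprob]; simp
    | succ a =>
      rw [GE, Fprob]
      rw [ENNReal.ofReal_add (Finset.sum_nonneg fun i _ => by
            have := Fprob_nonneg (a + 1 - i) b; positivity) (by positivity)]
      congr 1
      · rw [ENNReal.ofReal_sum_of_nonneg (fun i _ => by
            have := Fprob_nonneg (a + 1 - i) b; positivity)]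
        refine Finset.sum_congr rfl fun i _ => ?_
        rw [ENNReal.ofReal_mul (by positivity), ENNReal.ofReal_mul (by positivity),
          ih, ENNReal.ofReal_pow (by positivity), ENNReal.ofReal_natCast]
        congr 2
        rw [ENNReal.ofReal_inv_of_pos (by norm_num), ENNReal.ofReal_ofNat]
      · rw [ENNReal.ofReal_mul (by positivity), ENNReal.ofReal_natCast,
          ENNReal.ofReal_pow (by positivity),
          ENNReal.ofReal_inv_of_pos (by norm_num), ENNReal.ofReal_ofNat]
      all_goals simp

/-- weight of value `v` among `d` levels (values live in `Fin (d+1)`) -/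
noncomputable def w (d v : ℕ) : ENNReal := if v < d then 2⁻¹ ^ (v + 1) else 2⁻¹ ^ d

def Ev {α : Type} [Fintype α] [DecidableEq α] (d : ℕ) (f : α → Fin (d + 1)) : Prop :=
  ∃ i : Fin (d + 1), (i : ℕ) < d ∧ (Finset.univ.filter fun j => f j = i).card = 1

open Classical in
noncomputable def S (α : Type) [Fintype α] [DecidableEq α] (d : ℕ) : ENNReal :=
  ∑ f : α → Fin (d + 1), if Ev d f then ∏ j, w d ((f j : ℕ)) else 0

lemma w_succ (d v : ℕ) : w (d + 1) (v + 1) = 2⁻¹ * w d v := by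
  unfold w
  by_cases h : v < d
  · rw [if_pos (by omega), if_pos h]; ring
  · rw [if_neg (by omega), if_neg h]; ring

lemma w_sum (d : ℕ) : ∑ v : Fin (d + 1), w d (v : ℕ) = 1 := by
  induction d with
  | zero => simp [w]
  | succ d ih =>
    rw [Fin.sum_univ_succ]
    have h : ∀ v : Fin (d + 1), w (d + 1) ((v.succ : Fin (d + 2)) : ℕ) = 2⁻¹ * w d (v : ℕ) :=
      fun v => by rw [Fin.val_succ, w_succ]
    rw [Finset.sum_congr rfl (fun v _ => h v), ← Finset.mul_sum, ih, mul_one,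
      show w (d + 1) ((0 : Fin (d + 2)) : ℕ) = 2⁻¹ by simp [w]]
    exact ENNReal.inv_two_add_inv_two


def Phi {α : Type} [DecidableEq α] (d : ℕ) (T : Finset α)
    (g : {j // j ∉ T} → Fin (d + 1)) : α → Fin (d + 2) :=
  fun j => if h : j ∈ T then 0 else (g ⟨j, h⟩).succ

lemma Phi_fiber {α : Type} [Fintype α] [DecidableEq α] (d : ℕ) (T : Finset α)
    (g : {j // j ∉ T} → Fin (d + 1)) :
    (Finset.univ.filter fun j => Phi d T g j = 0) = T := by
  ext j
  by_cases h : j ∈ T <;> simp [Phi, h, Fin.succ_ne_zero]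

lemma Phi_count {α : Type} [Fintype α] [DecidableEq α] (d : ℕ) (T : Finset α)
    (g : {j // j ∉ T} → Fin (d + 1)) (i : Fin (d + 1)) :
    (Finset.univ.filter fun j : α => Phi d T g j = i.succ).card
      = (Finset.univ.filter fun j : {j // j ∉ T} => g j = i).card := by
  have h : (Finset.univ.filter fun j : α => Phi d T g j = i.succ)
      = (Finset.univ.filter fun j : {j // j ∉ T} => g j = i).map
        ⟨Subtype.val, Subtype.val_injective⟩ := by
    ext j
    simp only [Finset.mem_filter, Finset.mem_univ, true_and, Finset.mem_map,
      Function.Embedding.coeFn_mk]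
    constructor
    · intro hj
      by_cases h' : j ∈ T
      · exact absurd hj.symm (by rw [Phi, dif_pos h']; exact (Fin.succ_ne_zero i).symm ∘ Eq.symm)
      · refine ⟨⟨j, h'⟩, ?_, rfl⟩
        have : (g ⟨j, h'⟩).succ = i.succ := by rw [Phi, dif_neg h'] at hj; exact hj
        exact Fin.succ_injective _ this
    · rintro ⟨⟨j', hj'⟩, hg, rfl⟩
      rw [Phi, dif_neg hj', hg]
  rw [h, Finset.card_map]

lemma Phi_prod {α : Type} [Fintype α] [DecidableEq α] (d : ℕ) (T : Finset α)
    (g : {j // j ∉ T} → Fin (d + 1)) :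
    (∏ j, w (d + 1) ((Phi d T g j : ℕ)))
      = 2⁻¹ ^ (Fintype.card α) * ∏ j : {j // j ∉ T}, w d ((g j : ℕ)) := by
  rw [← Finset.prod_mul_prod_compl T]
  have h1 : (∏ j ∈ T, w (d + 1) ((Phi d T g j : ℕ))) = 2⁻¹ ^ T.card := by
    rw [Finset.prod_congr rfl (fun j hj => ?_), Finset.prod_const]
    rw [Phi, dif_pos hj]
    simp [w]
  have h2 : (∏ j ∈ Tᶜ, w (d + 1) ((Phi d T g j : ℕ)))
      = 2⁻¹ ^ (Tᶜ.card) * ∏ j : {j // j ∉ T}, w d ((g j : ℕ)) := by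
    have e1 : (∏ j ∈ Tᶜ, w (d + 1) ((Phi d T g j : ℕ)))
        = ∏ j : {j // j ∉ T}, w (d + 1) ((Phi d T g j.1 : ℕ)) :=
      Finset.prod_subtype Tᶜ (by simp) _
    rw [e1]
    have e2 : ∀ j : {j // j ∉ T}, w (d + 1) ((Phi d T g j.1 : ℕ)) = 2⁻¹ * w d ((g j : ℕ)) := by
      intro j
      rw [Phi, dif_neg j.2, Fin.val_succ, w_succ]
    rw [Finset.prod_congr rfl (fun j _ => e2 j), Finset.prod_mul_distrib, Finset.prod_const]
    congr 2
    rw [Finset.card_univ, Fintype.card_subtype]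
    congr 1
    ext j
    simp
  rw [h1, h2, ← mul_assoc, ← pow_add]
  congr 2
  rw [Finset.card_compl]
  have := Finset.card_le_univ T
  omega

lemma Ev_Phi {α : Type} [Fintype α] [DecidableEq α] (d : ℕ) (T : Finset α)
    (g : {j // j ∉ T} → Fin (d + 1)) :
    Ev (d + 1) (Phi d T g) ↔ T.card = 1 ∨ Ev d g := by
  constructor
  · rintro ⟨i, hi, hc⟩
    induction i using Fin.cases with
    | zero => left; rw [Phi_fiber] at hc; exact hc
    | succ i' =>
      right
      refine ⟨i', ?_, ?_⟩
      · have := Fin.val_succ i' ▸ hi; omega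
      · rw [Phi_count] at hc; exact hc
  · rintro (h1 | ⟨i, hi, hc⟩)
    · exact ⟨0, by simp, by rw [Phi_fiber]; exact h1⟩
    · exact ⟨i.succ, by rw [Fin.val_succ]; omega, by rw [Phi_count]; exact hc⟩

lemma total_mass (β : Type) [Fintype β] [DecidableEq β] (d : ℕ) :
    ∑ g : β → Fin (d + 1), ∏ j, w d ((g j : ℕ)) = 1 := by
  have h := Finset.prod_univ_sum (fun _ : β => (Finset.univ : Finset (Fin (d + 1))))
    (fun _ v => w d (v : ℕ))
  rw [Fintype.piFinset_univ] at h
  rw [← h]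
  simp [w_sum]

lemma main (d : ℕ) : ∀ (α : Type) [Fintype α] [DecidableEq α],
    S α d = GE (Fintype.card α) d := by
  induction d with
  | zero =>
    intro α _ _
    rw [GE]
    unfold S
    refine Finset.sum_eq_zero fun f _ => ?_
    rw [if_neg]
    rintro ⟨i, hi, -⟩
    omega
  | succ d ih =>
    intro α _ _
    classical
    set z := Fintype.card α with hzdef
    have FPhi : ∀ (T : Finset α) (g' : {j // j ∉ T} → Fin (d + 1)),
        (if Ev (d + 1) (Phi d T g') then ∏ j, w (d + 1) ((Phi d T g' j : ℕ)) else 0)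
          = (if T.card = 1 ∨ Ev d g' then 2⁻¹ ^ z * ∏ j, w d ((g' j : ℕ)) else 0) := by
      intro T g'
      by_cases hE : T.card = 1 ∨ Ev d g'
      · rw [if_pos ((Ev_Phi d T g').mpr hE), if_pos hE, Phi_prod]
      · rw [if_neg (fun hc => hE ((Ev_Phi d T g').mp hc)), if_neg hE]
    have cardc : ∀ T : Finset α, Fintype.card {j // j ∉ T} = z - T.card := by
      intro T
      rw [Fintype.card_subtype, hzdef, ← Finset.card_compl]
      congr 1
      ext j
      simp
    have inner : ∀ T : Finset α,
        (∑ f ∈ Finset.univ.filter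
            (fun f : α → Fin (d + 2) => Finset.univ.filter (fun j => f j = 0) = T),
          (if Ev (d + 1) f then ∏ j, w (d + 1) ((f j : ℕ)) else 0))
        = 2⁻¹ ^ z * (if T.card = 1 then 1 else GE (z - T.card) d) := by
      intro T
      set ifun : (α → Fin (d + 2)) → ({j // j ∉ T} → Fin (d + 1)) :=
        fun f => fun j => if h : f j.1 = 0 then 0 else (f j.1).pred h with hifun
      have hPhi : ∀ f ∈ Finset.univ.filter
          (fun f : α → Fin (d + 2) => Finset.univ.filter (fun j => f j = 0) = T),
          Phi d T (ifun f) = f := by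
        intro f hf
        have hT := (Finset.mem_filter.mp hf).2
        have hmem : ∀ j, j ∈ T ↔ f j = 0 := by
          intro j; rw [← hT]; simp
        funext j
        rw [Phi]
        by_cases h : j ∈ T
        · rw [dif_pos h]; exact ((hmem j).mp h).symm
        · have hne : f j ≠ 0 := fun hc => h ((hmem j).mpr hc)
          rw [dif_neg h, hifun]
          simp only [dif_neg hne, Fin.succ_pred]
      have step := Finset.sum_nbij' (i := ifun) (j := Phi d T)
        (s := Finset.univ.filter
            (fun f : α → Fin (d + 2) => Finset.univ.filter (fun j => f j = 0) = T))
        (t := Finset.univ)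
        (f := fun f => if Ev (d + 1) f then ∏ j, w (d + 1) ((f j : ℕ)) else 0)
        (g := fun g' => if T.card = 1 ∨ Ev d g' then 2⁻¹ ^ z * ∏ j, w d ((g' j : ℕ)) else 0)
        (fun _ _ => Finset.mem_univ _)
        (fun g' _ => Finset.mem_filter.mpr ⟨Finset.mem_univ _, Phi_fiber d T g'⟩)
        hPhi
        (by
          intro g' _
          funext j
          rw [hifun]
          have hPj : Phi d T g' j.1 = (g' j).succ := by
            rw [Phi, dif_neg j.2]
          simp only [hPj, dif_neg (Fin.succ_ne_zero _), Fin.pred_succ])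
        (by
          intro f hf
          conv_lhs => rw [← hPhi f hf]
          exact FPhi T (ifun f))
      rw [step]
      by_cases hT : T.card = 1
      · rw [if_pos hT]
        have : ∀ g' : {j // j ∉ T} → Fin (d + 1),
            (if T.card = 1 ∨ Ev d g' then 2⁻¹ ^ z * ∏ j, w d ((g' j : ℕ)) else 0)
              = 2⁻¹ ^ z * ∏ j, w d ((g' j : ℕ)) := fun g' => if_pos (Or.inl hT)
        rw [Finset.sum_congr rfl (fun g' _ => this g'), ← Finset.mul_sum, total_mass]
      · rw [if_neg hT]
        have : ∀ g' : {j // j ∉ T} → Fin (d + 1),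
            (if T.card = 1 ∨ Ev d g' then 2⁻¹ ^ z * ∏ j, w d ((g' j : ℕ)) else 0)
              = 2⁻¹ ^ z * (if Ev d g' then ∏ j, w d ((g' j : ℕ)) else 0) := by
          intro g'
          by_cases hE : Ev d g'
          · rw [if_pos (Or.inr hE), if_pos hE]
          · rw [if_neg (by tauto), if_neg hE, mul_zero]
        rw [Finset.sum_congr rfl (fun g' _ => this g'), ← Finset.mul_sum]
        congr 1
        have hS : S {j // j ∉ T} d = GE (Fintype.card {j // j ∉ T}) d := ih _
        rw [← cardc T, ← hS]
        unfold S
        exact Finset.sum_congr rfl fun g' _ => by congr 1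
    have step1 : S α (d + 1)
        = ∑ T : Finset α, ∑ f ∈ Finset.univ.filter
            (fun f : α → Fin (d + 2) => Finset.univ.filter (fun j => f j = 0) = T),
          (if Ev (d + 1) f then ∏ j, w (d + 1) ((f j : ℕ)) else 0) := by
      unfold S
      exact (Finset.sum_fiberwise Finset.univ
        (fun f : α → Fin (d + 2) => Finset.univ.filter (fun j => f j = 0)) _).symm
    rw [step1, Finset.sum_congr rfl (fun T _ => inner T), ← Finset.powerset_univ,
      Finset.sum_powerset]
    have hcard : ∀ i : ℕ, ∀ T ∈ Finset.powersetCard i (Finset.univ : Finset α),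
        (2 : ENNReal)⁻¹ ^ z * (if T.card = 1 then 1 else GE (z - T.card) d)
          = 2⁻¹ ^ z * (if i = 1 then 1 else GE (z - i) d) := by
      intro i T hT
      rw [(Finset.mem_powersetCard_univ.mp hT : T.card = i)]
    have : ∀ i ∈ Finset.range ((Finset.univ : Finset α).card + 1),
        (∑ T ∈ Finset.powersetCard i (Finset.univ : Finset α),
          2⁻¹ ^ z * (if T.card = 1 then 1 else GE (z - T.card) d))
        = (z.choose i : ENNReal) * (2⁻¹ ^ z * (if i = 1 then 1 else GE (z - i) d)) := by
      intro i _
      rw [Finset.sum_congr rfl (hcard i), Finset.sum_const, Finset.card_powersetCard,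
        Finset.card_univ, nsmul_eq_mul]
    rw [Finset.sum_congr rfl this, Finset.card_univ, ← hzdef]
    rcases Nat.eq_zero_or_pos z with h0 | hpos
    · rw [h0]
      simp [GE_zero]
    · have hz1 : z = (z - 1) + 1 := by omega
      rw [hz1, GE]
      case x_2 => simp
      rw [← Finset.sum_erase_add _ _ (show (1 : ℕ) ∈ Finset.range (z - 1 + 1 + 1) by
        simp)]
      congr 1
      · refine Finset.sum_congr rfl fun i hi => ?_
        rw [if_neg (Finset.mem_erase.mp hi).1]
        ring
      · rw [if_pos rfl, Nat.choose_one_right, mul_one]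

/-- Each of `z` nonzero indices independently gets depth `i ∈ {1,…,d}` with probability
`2^{-i}` (residual mass `2^{-d}`: no depth). We encode depths in `Fin (d+1)`: value
`v < d` means depth `v+1` (probability `2^{-(v+1)}`), and value `d` means no depth
(probability `2^{-d}`). Bucket `b_i` holds the indices of depth `i`, and is good if it
holds exactly one index. The probability some bucket is good is `F(z,d)`. -/
theorem stmt1 (z d : ℕ) (hz : 1 ≤ z) (hd : 1 ≤ d)
    (μ : Measure (Fin z → Fin (d + 1))) [IsProbabilityMeasure μ]
    (hμ : ∀ y : Fin z → Fin (d + 1),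
      μ {f | f = y} = ∏ j : Fin z,
        (if (y j : ℕ) < d then ((2 : ENNReal))⁻¹ ^ ((y j : ℕ) + 1)
         else ((2 : ENNReal))⁻¹ ^ d)) :
    μ {f | ∃ i : Fin (d + 1), (i : ℕ) < d ∧
        (Finset.univ.filter fun j => f j = i).card = 1} =
      ENNReal.ofReal (Fprob z d) := by
  classical
  have key : μ {f | Ev d f} = S (Fin z) d := by
    have h1 : {f : Fin z → Fin (d+1) | Ev d f} = ↑(Finset.univ.filter fun f : Fin z → Fin (d+1) => Ev d f) := by
      ext f; simp
    have h2 : (↑(Finset.univ.filter fun f : Fin z → Fin (d+1) => Ev d f) :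
        Set (Fin z → Fin (d+1))) = ⋃ b ∈ (Finset.univ.filter fun f : Fin z → Fin (d+1) => Ev d f), {b} := by
      ext f; simp
    rw [h1, h2, measure_biUnion_finset]
    · rw [Finset.sum_filter]
      unfold S
      refine Finset.sum_congr rfl fun y _ => ?_
      have : μ {y} = ∏ j, w d ((y j : ℕ)) := by
        rw [show ({y} : Set (Fin z → Fin (d+1))) = {f | f = y} by ext; simp, hμ]
        rfl
      split <;> simp [this]
    · intro a _ b _ hab
      simp [Set.disjoint_singleton, hab]
    · intro b _; exact measurableSet_singleton b
  have : {f : Fin z → Fin (d+1) | ∃ i : Fin (d + 1), (i : ℕ) < d ∧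
        (Finset.univ.filter fun j => f j = i).card = 1} = {f | Ev d f} := rfl
  rw [this, key, main d (Fin z), Fintype.card_fin, GE_eq]
end

section
/- Suppose each of the b bucket positions of a CameoSketch column is a subset of the corresponding CubeSketch bucket in the sense that every nonzero index stored in CameoSketch bucket (i,j) is also stored in CubeSketch bucket (i,j), and every nonzero index appears in CameoSketch at its deepest CubeSketch row. If the deepest good bucket (containing exactly one nonzero index) of the CubeSketch column is b_{i,j}, then CameoSketch bucket b_{i,j} has identical contents, and hence if the CubeSketch column returns a valid index then so does the CameoSketch column. -/
/-- A CubeSketch column places each nonzero index at all rows `0..r` up to its hashed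
depth `r` (so `cube` is downward closed in the row index); the CameoSketch column with
the same hash places each index at row `0` and at its deepest row only (so
`cameo i ⊆ cube i`, and each index appears in `cameo` at its deepest `cube` row).
If `b_{i₀}` is the deepest good bucket of the CubeSketch column (exactly one index,
and no deeper bucket is good), then the CameoSketch bucket at `i₀` has identical
contents; hence if the CubeSketch column has a good bucket then so does the
CameoSketch column. -/
theorem stmt12 {ι : Type*} [DecidableEq ι] (rows : ℕ)
    (cube cameo : Fin rows → Finset ι)
    (hsub : ∀ i, cameo i ⊆ cube i)
    (hdown : ∀ (x : ι) (i j : Fin rows), x ∈ cube i → j ≤ i → x ∈ cube j)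
    (hdeep : ∀ (x : ι) (i : Fin rows), x ∈ cube i → (∀ j, i < j → x ∉ cube j) →
      x ∈ cameo i)
    (i₀ : Fin rows) (hgood : (cube i₀).card = 1)
    (hdeepest : ∀ j, i₀ < j → (cube j).card ≠ 1) :
    cameo i₀ = cube i₀ ∧ ∃ i, (cameo i).card = 1 := by
  obtain ⟨x, hx⟩ := Finset.card_eq_one.mp hgood
  have hnot : ∀ j, i₀ < j → x ∉ cube j := by
    intro j hj hxj
    apply hdeepest j hj
    have hsubj : cube j ⊆ cube i₀ := fun y hy => hdown y j i₀ hy hj.le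
    have : cube j = {x} := by
      apply Finset.Subset.antisymm
      · rw [← hx]; exact hsubj
      · intro y hy
        simp only [Finset.mem_singleton] at hy
        subst hy; exact hxj
    rw [this]; simp
  have hxc : x ∈ cameo i₀ := by
    apply hdeep x i₀ _ hnot
    rw [hx]; simp
  have heq : cameo i₀ = cube i₀ := by
    apply Finset.Subset.antisymm (hsub i₀)
    rw [hx]
    intro y hy
    simp only [Finset.mem_singleton] at hy
    subst hy; exact hxc
  exact ⟨heq, i₀, by rw [heq, hgood]⟩
end

section
/- Let T be a spanning forest of graph G maintained by GreedyCC, together with a union-find structure whose sets are the connected components of T. Suppose after constructing T, a sequence of edge insertions is processed by unioning endpoints, and every edge deletion processed deletes only non-forest edges (edges not in T). Then at any point, the union-find sets exactly equal the connected components of the current graph. -/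
/-!
The maintained forest `F` stays inside the current graph and has the same components. An
inserted edge either closes a cycle, leaving components and `F` unchanged, or merges two
components, and then `F` gains that very edge. A deleted edge lies outside `F`, so the components
of `F` sit between those of the new and of the old graph, which coincide with them. Union-find
follows the components because unioning the endpoints of `e` is exactly the equivalence closure
that adding `e` to the graph produces.
-/

open scoped Classical

open SimpleGraph Relation

namespace SimpleGraph

variable {V : Type*}

theorem reachable_fromEdgeSet_union_singleton (A : Set (Sym2 V)) (e : Sym2 V) :
    (fromEdgeSet (A ∪ {e})).Reachable =
      EqvGen fun a b => (fromEdgeSet A).Reachable a b ∨ s(a, b) = e := by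
  have : IsEquiv V (fromEdgeSet (A ∪ {e})).Reachable := reachable_is_equivalence _ |>.isEquiv
  refine le_antisymm ?_ (EqvGen.eqvGen_le ?_)
  · rw [reachable_eq_reflTransGen]
    refine (EqvGen.reflTransGen_le_eqvGen _).trans (EqvGen.mono ?_)
    rintro a b ⟨hab | hab, hne⟩
    · exact .inl (Adj.reachable ⟨hab, hne⟩)
    · exact .inr hab
  · rintro a b (hab | rfl)
    · exact hab.mono (fromEdgeSet_mono Set.subset_union_left)
    · obtain rfl | hne := eq_or_ne a b
      · rfl
      · exact Adj.reachable ⟨.inr rfl, hne⟩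

theorem reachable_fromEdgeSet_union_singleton_of_reachable {A : Set (Sym2 V)} {e : Sym2 V}
    (he : ∀ a b, s(a, b) = e → (fromEdgeSet A).Reachable a b) :
    (fromEdgeSet (A ∪ {e})).Reachable = (fromEdgeSet A).Reachable := by
  rw [reachable_fromEdgeSet_union_singleton]
  conv_rhs => rw [← (reachable_is_equivalence _).eqvGen_eq]
  congr
  ext a b
  exact or_iff_left_of_imp (he a b)

end SimpleGraph

structure GreedyCCInvariant {V : Type*} (F G : Set (Sym2 V)) (D : V → V → Prop) : Prop where
  subset : F ⊆ G
  reachable_eq : (fromEdgeSet F).Reachable = (fromEdgeSet G).Reachable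
  rel_eq : D = (fromEdgeSet G).Reachable

namespace GreedyCCInvariant

variable {V : Type*} {F G : Set (Sym2 V)} {D : V → V → Prop}

theorem insert (h : GreedyCCInvariant F G D) (e : Sym2 V) :
    GreedyCCInvariant
      (if ∀ a b : V, s(a, b) = e → D a b then F else F ∪ {e}) (G ∪ {e})
      (EqvGen fun a b => D a b ∨ s(a, b) = e) := by
  have hD : (EqvGen fun a b => D a b ∨ s(a, b) = e) = (fromEdgeSet (G ∪ {e})).Reachable := by
    rw [h.rel_eq, reachable_fromEdgeSet_union_singleton]
  split_ifs with hcycle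
  · -- `e` closes a cycle, so it does not change the components
    refine ⟨h.subset.trans Set.subset_union_left, ?_, hD⟩
    rw [reachable_fromEdgeSet_union_singleton_of_reachable (h.rel_eq ▸ hcycle), h.reachable_eq]
  · refine ⟨Set.union_subset_union_left _ h.subset, ?_, hD⟩
    rw [reachable_fromEdgeSet_union_singleton, h.reachable_eq,
      reachable_fromEdgeSet_union_singleton]

theorem delete (h : GreedyCCInvariant F G D) {e : Sym2 V} (he : e ∉ F) :
    GreedyCCInvariant F (G \ {e}) D := by
  have hsub : F ⊆ G \ {e} := fun x hx => ⟨h.subset hx, fun hxe => he (hxe ▸ hx)⟩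
  have hreach : (fromEdgeSet F).Reachable = (fromEdgeSet (G \ {e})).Reachable :=
    le_antisymm (fun _ _ hr => hr.mono (fromEdgeSet_mono hsub))
      (h.reachable_eq ▸ fun _ _ hr => hr.mono (fromEdgeSet_mono Set.sdiff_subset))
  exact ⟨hsub, hreach, h.rel_eq.trans (h.reachable_eq ▸ hreach)⟩

end GreedyCCInvariant

/-- GreedyCC invariant. `T` is a spanning forest of the initial graph `G0` (same
reachability), `D 0` is the union-find relation with sets the components of `T`.
The stream `op` interleaves insertions (`true`) and deletions (`false`):
an insertion `e` unions the endpoints' sets (equivalence closure) and, if it merged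
two distinct components, is added to the maintained forest `F`; a deletion removes
only a non-forest edge (`e ∉ F k`) and leaves both the forest and the union-find
unchanged. Then at every point the union-find sets exactly equal the connected
components of the current graph `Gr k`. -/
theorem stmt15 {V : Type*} (Nn : ℕ)
    (op : Fin Nn → Sym2 V × Bool)
    (G0 T : Set (Sym2 V)) (hT : T ⊆ G0)
    (hspan : ∀ u v : V, (SimpleGraph.fromEdgeSet T).Reachable u v ↔
      (SimpleGraph.fromEdgeSet G0).Reachable u v)
    (Gr : ℕ → Set (Sym2 V)) (hGr0 : Gr 0 = G0)
    (hGrIns : ∀ (k : ℕ) (hk : k < Nn), (op ⟨k, hk⟩).2 = true →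
      Gr (k + 1) = Gr k ∪ {(op ⟨k, hk⟩).1})
    (hGrDel : ∀ (k : ℕ) (hk : k < Nn), (op ⟨k, hk⟩).2 = false →
      Gr (k + 1) = Gr k \ {(op ⟨k, hk⟩).1})
    (F : ℕ → Set (Sym2 V)) (hF0 : F 0 = T)
    (D : ℕ → V → V → Prop)
    (hD0 : ∀ u v, D 0 u v ↔ (SimpleGraph.fromEdgeSet T).Reachable u v)
    (hDIns : ∀ (k : ℕ) (hk : k < Nn), (op ⟨k, hk⟩).2 = true → ∀ u v,
      D (k + 1) u v ↔ Relation.EqvGen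
        (fun a b => D k a b ∨ s(a, b) = (op ⟨k, hk⟩).1) u v)
    (hFIns : ∀ (k : ℕ) (hk : k < Nn), (op ⟨k, hk⟩).2 = true →
      F (k + 1) =
        if ∀ a b : V, s(a, b) = (op ⟨k, hk⟩).1 → D k a b then F k
        else F k ∪ {(op ⟨k, hk⟩).1})
    (hDel : ∀ (k : ℕ) (hk : k < Nn), (op ⟨k, hk⟩).2 = false →
      (op ⟨k, hk⟩).1 ∉ F k ∧ F (k + 1) = F k ∧ (∀ u v, D (k + 1) u v ↔ D k u v))
    (k : ℕ) (hk : k ≤ Nn) (u v : V) :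
    D k u v ↔ (SimpleGraph.fromEdgeSet (Gr k)).Reachable u v := by
  suffices h : ∀ k ≤ Nn, GreedyCCInvariant (F k) (Gr k) (D k) by
    rw [(h k hk).rel_eq]
  intro k hk
  induction k with
  | zero =>
    have hT0 : (fromEdgeSet T).Reachable = (fromEdgeSet G0).Reachable := by ext; exact hspan _ _
    have hD0 : D 0 = (fromEdgeSet T).Reachable := by ext; exact hD0 _ _
    rw [hF0, hGr0, hD0]
    exact ⟨hT, hT0, hT0⟩
  | succ k ih =>
    have hk' : k < Nn := hk
    cases hop : (op ⟨k, hk'⟩).2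
    · obtain ⟨heF, hF1, hD1⟩ := hDel k hk' hop
      have hD1 : D (k + 1) = D k := by ext; exact hD1 _ _
      rw [hGrDel k hk' hop, hF1, hD1]
      exact (ih hk'.le).delete heF
    · have hD1 : D (k + 1) = EqvGen fun a b => D k a b ∨ s(a, b) = (op ⟨k, hk'⟩).1 := by
        ext; exact hDIns k hk' hop _ _
      rw [hGrIns k hk' hop, hFIns k hk' hop, hD1]
      exact (ih hk'.le).insert _
end
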